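/- In stochastic games, the almost-sure eventually synchronizing winning region decomposes as Win^event_almost(T) = Win^event_sure(T) ∪ Win^weakly_almost(T). -/
import Mathlib


open Finset

/-- A two-player stochastic game: transition kernel `δ q a b q'`. -/
structure Game (Q A : Type) where
  δ : Q → A → A → Q → ℝ

/-- Validity of the transition kernel: a probability distribution on `Q` for each `q,a,b`. -/
def IsGame {Q A : Type} [Fintype Q] (G : Game Q A) : Prop :=
  (∀ q a b q', 0 ≤ G.δ q a b q') ∧ (∀ q a b, (∑ q' : Q, G.δ q a b q') = 1)

/-- A probability distribution over a finite set. -/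
def IsDist {Q : Type} [Fintype Q] (d : Q → ℝ) : Prop :=
  (∀ q, 0 ≤ d q) ∧ (∑ q : Q, d q) = 1

/-- Randomized player-1 strategies: map (reversed) state histories to distributions on actions. -/
abbrev Strat1 (Q A : Type) := List Q → A → ℝ
/-- Randomized player-2 strategies: also see the action chosen by player 1. -/
abbrev Strat2 (Q A : Type) := List Q → A → A → ℝ

def IsStrat1 {Q A : Type} [Fintype A] (σ : Strat1 Q A) : Prop :=
  ∀ h, (∀ a, 0 ≤ σ h a) ∧ (∑ a : A, σ h a) = 1

def IsStrat2 {Q A : Type} [Fintype A] (τ : Strat2 Q A) : Prop :=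
  ∀ h a, (∀ b, 0 ≤ τ h a b) ∧ (∑ b : A, τ h a b) = 1

/-- Probability of a finite state history (in reverse chronological order:
the head is the current state), with the actions marginalized out. -/
def hprob {Q A : Type} [Fintype A] (G : Game Q A) (d0 : Q → ℝ)
    (σ : Strat1 Q A) (τ : Strat2 Q A) : List Q → ℝ
  | [] => 1
  | [q] => d0 q
  | q :: q' :: h =>
      (∑ a : A, ∑ b : A, σ (q' :: h) a * τ (q' :: h) a b * G.δ q' a b q) *
        hprob G d0 σ τ (q' :: h)

/-- The outcome sequence of distributions: probability to be in state `q` after `i` rounds. -/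
def outSeq {Q A : Type} [Fintype Q] [Fintype A] (G : Game Q A) (d0 : Q → ℝ)
    (σ : Strat1 Q A) (τ : Strat2 Q A) (i : ℕ) (q : Q) : ℝ :=
  ∑ h : Fin i → Q, hprob G d0 σ τ (q :: (List.ofFn h).reverse)

/-- Probability mass of a set of states. -/
def mass {Q : Type} (d : Q → ℝ) (T : Finset Q) : ℝ := ∑ q ∈ T, d q

/-- The four synchronizing modes, on a sequence of probability masses. -/
def AlwaysSync (m : ℕ → ℝ) (ε : ℝ) : Prop := ∀ i, 1 - ε ≤ m i
def EventSync (m : ℕ → ℝ) (ε : ℝ) : Prop := ∃ i, 1 - ε ≤ m i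
def WeaklySync (m : ℕ → ℝ) (ε : ℝ) : Prop := ∀ N, ∃ i, N ≤ i ∧ 1 - ε ≤ m i
def StronglySync (m : ℕ → ℝ) (ε : ℝ) : Prop := ∃ N, ∀ i, N ≤ i → 1 - ε ≤ m i

/-- Sure winning region for a synchronizing mode `sync`: some player-1 strategy ensures
`1`-synchronization against all player-2 strategies. -/
def SureWin {Q A : Type} [Fintype Q] [Fintype A] (G : Game Q A) (T : Finset Q)
    (sync : (ℕ → ℝ) → ℝ → Prop) : Set (Q → ℝ) :=
  {d0 | IsDist d0 ∧ ∃ σ, IsStrat1 σ ∧ ∀ τ, IsStrat2 τ →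
    sync (fun i => mass (outSeq G d0 σ τ i) T) 0}

/-- Almost-sure winning region for a synchronizing mode `sync`: some player-1 strategy
ensures `(1-ε)`-synchronization for all `ε > 0` against all player-2 strategies. -/
def ASWin {Q A : Type} [Fintype Q] [Fintype A] (G : Game Q A) (T : Finset Q)
    (sync : (ℕ → ℝ) → ℝ → Prop) : Set (Q → ℝ) :=
  {d0 | IsDist d0 ∧ ∃ σ, IsStrat1 σ ∧ ∀ τ, IsStrat2 τ →
    ∀ ε : ℝ, 0 < ε → sync (fun i => mass (outSeq G d0 σ τ i) T) ε}

/-- Dirac distribution. -/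
def dirac {Q : Type} [DecidableEq Q] (q : Q) : Q → ℝ := fun q' => if q' = q then 1 else 0

section Aux

variable {Q A : Type} [Fintype Q] [Fintype A]

lemma hprob_nonneg (G : Game Q A) (hG : IsGame G) {d0 : Q → ℝ} (hd0 : IsDist d0)
    {σ : Strat1 Q A} (hσ : IsStrat1 σ) {τ : Strat2 Q A} (hτ : IsStrat2 τ) :
    ∀ l, 0 ≤ hprob G d0 σ τ l
  | [] => by simp [hprob]
  | [q] => by simpa [hprob] using hd0.1 q
  | q :: q' :: h => by
      have IH := hprob_nonneg G hG hd0 hσ hτ (q' :: h)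
      show 0 ≤ (∑ a : A, ∑ b : A, σ (q' :: h) a * τ (q' :: h) a b * G.δ q' a b q) *
        hprob G d0 σ τ (q' :: h)
      refine mul_nonneg (Finset.sum_nonneg fun a _ => Finset.sum_nonneg fun b _ => ?_) IH
      exact mul_nonneg (mul_nonneg ((hσ _).1 a) ((hτ _ _).1 b)) (hG.1 _ _ _ _)

lemma snoc_sum (F : List Q → ℝ) (i : ℕ) :
    ∑ h : Fin (i + 1) → Q, F ((List.ofFn h).reverse)
      = ∑ x : Q, ∑ g : Fin i → Q, F (x :: (List.ofFn g).reverse) := by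
  rw [← Equiv.sum_comp (Fin.snocEquiv (fun _ : Fin (i + 1) => Q))
        (fun h => F ((List.ofFn h).reverse)), Fintype.sum_prod_type]
  refine Finset.sum_congr rfl fun x _ => Finset.sum_congr rfl fun g _ => ?_
  have : List.ofFn (Fin.snocEquiv (fun _ : Fin (i + 1) => Q) (x, g))
      = (List.ofFn g).concat x := by
    rw [List.ofFn_succ']
    simp [Fin.snocEquiv_apply, Fin.snoc_castSucc, Fin.snoc_last]
  rw [this, List.concat_eq_append, List.reverse_append, List.reverse_singleton,
    List.singleton_append]

lemma outSeq_total (G : Game Q A) (hG : IsGame G) {d0 : Q → ℝ} (hd0 : IsDist d0)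
    {σ : Strat1 Q A} (hσ : IsStrat1 σ) {τ : Strat2 Q A} (hτ : IsStrat2 τ) :
    ∀ i, ∑ q : Q, outSeq G d0 σ τ i q = 1 := by
  intro i
  induction i with
  | zero =>
      have : ∀ q : Q, outSeq G d0 σ τ 0 q = d0 q := by
        intro q
        unfold outSeq
        rw [Fintype.sum_unique]
        simp [hprob]
      simp only [this]
      exact hd0.2
  | succ i IH =>
      have hstep : ∀ (x : Q) (g : Fin i → Q),
          ∑ q : Q, hprob G d0 σ τ (q :: x :: (List.ofFn g).reverse)
            = hprob G d0 σ τ (x :: (List.ofFn g).reverse) := by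
        intro x g
        have : ∀ q : Q, hprob G d0 σ τ (q :: x :: (List.ofFn g).reverse)
            = (∑ a : A, ∑ b : A, σ (x :: (List.ofFn g).reverse) a *
                τ (x :: (List.ofFn g).reverse) a b * G.δ x a b q) *
              hprob G d0 σ τ (x :: (List.ofFn g).reverse) := fun q => rfl
        simp only [this]
        rw [← Finset.sum_mul]
        have hone : ∑ q : Q, ∑ a : A, ∑ b : A, σ (x :: (List.ofFn g).reverse) a *
            τ (x :: (List.ofFn g).reverse) a b * G.δ x a b q = 1 := by
          rw [Finset.sum_comm]
          have : ∀ a : A, ∑ q : Q, ∑ b : A, σ (x :: (List.ofFn g).reverse) a *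
              τ (x :: (List.ofFn g).reverse) a b * G.δ x a b q
              = σ (x :: (List.ofFn g).reverse) a := by
            intro a
            rw [Finset.sum_comm]
            have : ∀ b : A, ∑ q : Q, σ (x :: (List.ofFn g).reverse) a *
                τ (x :: (List.ofFn g).reverse) a b * G.δ x a b q
                = σ (x :: (List.ofFn g).reverse) a * τ (x :: (List.ofFn g).reverse) a b := by
              intro b
              rw [← Finset.mul_sum, hG.2, mul_one]
            simp only [this]
            rw [← Finset.mul_sum, (hτ _ _).2, mul_one]
          simp only [this]
          exact (hσ _).2
        rw [hone, one_mul]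
      calc ∑ q : Q, outSeq G d0 σ τ (i + 1) q
          = ∑ q : Q, ∑ x : Q, ∑ g : Fin i → Q,
              hprob G d0 σ τ (q :: x :: (List.ofFn g).reverse) := by
            refine Finset.sum_congr rfl fun q _ => ?_
            exact snoc_sum (fun l => hprob G d0 σ τ (q :: l)) i
        _ = ∑ x : Q, ∑ g : Fin i → Q, ∑ q : Q,
              hprob G d0 σ τ (q :: x :: (List.ofFn g).reverse) := by
            rw [Finset.sum_comm]
            exact Finset.sum_congr rfl fun x _ => Finset.sum_comm
        _ = ∑ x : Q, ∑ g : Fin i → Q, hprob G d0 σ τ (x :: (List.ofFn g).reverse) := by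
            exact Finset.sum_congr rfl fun x _ => Finset.sum_congr rfl fun g _ => hstep x g
        _ = 1 := IH

lemma mass_le_one (G : Game Q A) (hG : IsGame G) {d0 : Q → ℝ} (hd0 : IsDist d0)
    {σ : Strat1 Q A} (hσ : IsStrat1 σ) {τ : Strat2 Q A} (hτ : IsStrat2 τ)
    (T : Finset Q) (i : ℕ) : mass (outSeq G d0 σ τ i) T ≤ 1 := by
  rw [← outSeq_total G hG hd0 hσ hτ i]
  refine Finset.sum_le_sum_of_subset_of_nonneg (Finset.subset_univ T) fun q _ _ => ?_
  exact Finset.sum_nonneg fun h _ => hprob_nonneg G hG hd0 hσ hτ _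

/-- Superposition of two player-2 strategies (behavioral realization of playing
each with probability 1/2). -/
noncomputable def mixStrat (G : Game Q A) (d0 : Q → ℝ) (σ : Strat1 Q A)
    (τe τw : Strat2 Q A) : Strat2 Q A := fun h a b =>
  open Classical in
  if hprob G d0 σ τe h + hprob G d0 σ τw h = 0 then τe h a b
  else (hprob G d0 σ τe h * τe h a b + hprob G d0 σ τw h * τw h a b) /
    (hprob G d0 σ τe h + hprob G d0 σ τw h)

lemma mixStrat_isStrat (G : Game Q A) (hG : IsGame G) {d0 : Q → ℝ} (hd0 : IsDist d0)
    {σ : Strat1 Q A} (hσ : IsStrat1 σ) {τe τw : Strat2 Q A}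
    (hτe : IsStrat2 τe) (hτw : IsStrat2 τw) :
    IsStrat2 (mixStrat G d0 σ τe τw) := by
  intro h a
  have hpe := hprob_nonneg G hG hd0 hσ hτe h
  have hpw := hprob_nonneg G hG hd0 hσ hτw h
  constructor
  · intro b
    unfold mixStrat
    split
    · exact (hτe h a).1 b
    · exact div_nonneg (add_nonneg (mul_nonneg hpe ((hτe h a).1 b))
        (mul_nonneg hpw ((hτw h a).1 b))) (add_nonneg hpe hpw)
  · unfold mixStrat
    split
    · exact (hτe h a).2
    · rename_i hne
      rw [← Finset.sum_div, Finset.sum_add_distrib, ← Finset.mul_sum, ← Finset.mul_sum,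
        (hτe h a).2, (hτw h a).2, mul_one, mul_one, div_self hne]

lemma hprob_mixStrat (G : Game Q A) (hG : IsGame G) {d0 : Q → ℝ} (hd0 : IsDist d0)
    {σ : Strat1 Q A} (hσ : IsStrat1 σ) {τe τw : Strat2 Q A}
    (hτe : IsStrat2 τe) (hτw : IsStrat2 τw) :
    ∀ l, hprob G d0 σ (mixStrat G d0 σ τe τw) l
      = (hprob G d0 σ τe l + hprob G d0 σ τw l) / 2
  | [] => by simp [hprob]
  | [q] => by simp [hprob]
  | q :: q' :: h => by
      have IH := hprob_mixStrat G hG hd0 hσ hτe hτw (q' :: h)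
      set pe := hprob G d0 σ τe (q' :: h) with hpe_def
      set pw := hprob G d0 σ τw (q' :: h) with hpw_def
      have hpe := hprob_nonneg G hG hd0 hσ hτe (q' :: h)
      have hpw := hprob_nonneg G hG hd0 hσ hτw (q' :: h)
      have hmixl : hprob G d0 σ (mixStrat G d0 σ τe τw) (q :: q' :: h)
          = (∑ a : A, ∑ b : A, σ (q' :: h) a * mixStrat G d0 σ τe τw (q' :: h) a b *
              G.δ q' a b q) * hprob G d0 σ (mixStrat G d0 σ τe τw) (q' :: h) := rfl
      have hel : hprob G d0 σ τe (q :: q' :: h)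
          = (∑ a : A, ∑ b : A, σ (q' :: h) a * τe (q' :: h) a b * G.δ q' a b q) * pe := rfl
      have hwl : hprob G d0 σ τw (q :: q' :: h)
          = (∑ a : A, ∑ b : A, σ (q' :: h) a * τw (q' :: h) a b * G.δ q' a b q) * pw := rfl
      rw [hmixl, hel, hwl, IH]
      by_cases hz : pe + pw = 0
      · have hpe0 : pe = 0 := le_antisymm (by linarith) hpe
        have hpw0 : pw = 0 := le_antisymm (by linarith) hpw
        rw [hz, hpe0, hpw0]
        ring
      · have hmix_eq : ∀ a b, mixStrat G d0 σ τe τw (q' :: h) a b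
            = (pe * τe (q' :: h) a b + pw * τw (q' :: h) a b) / (pe + pw) := by
          intro a b
          unfold mixStrat
          rw [← hpe_def, ← hpw_def, if_neg hz]
        have hne' : pe + pw ≠ 0 := hz
        have expand : (∑ a : A, ∑ b : A, σ (q' :: h) a *
              mixStrat G d0 σ τe τw (q' :: h) a b * G.δ q' a b q) * (pe + pw)
            = (∑ a : A, ∑ b : A, σ (q' :: h) a * τe (q' :: h) a b * G.δ q' a b q) * pe
              + (∑ a : A, ∑ b : A, σ (q' :: h) a * τw (q' :: h) a b * G.δ q' a b q) * pw := by
          rw [Finset.sum_mul, Finset.sum_mul, Finset.sum_mul, ← Finset.sum_add_distrib]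
          refine Finset.sum_congr rfl fun a _ => ?_
          rw [Finset.sum_mul, Finset.sum_mul, Finset.sum_mul, ← Finset.sum_add_distrib]
          refine Finset.sum_congr rfl fun b _ => ?_
          rw [hmix_eq a b]
          field_simp
        calc (∑ a : A, ∑ b : A, σ (q' :: h) a *
              mixStrat G d0 σ τe τw (q' :: h) a b * G.δ q' a b q) * ((pe + pw) / 2)
            = ((∑ a : A, ∑ b : A, σ (q' :: h) a *
              mixStrat G d0 σ τe τw (q' :: h) a b * G.δ q' a b q) * (pe + pw)) / 2 := by ring
          _ = ((∑ a : A, ∑ b : A, σ (q' :: h) a * τe (q' :: h) a b * G.δ q' a b q) * pe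
              + (∑ a : A, ∑ b : A, σ (q' :: h) a * τw (q' :: h) a b * G.δ q' a b q) * pw)
              / 2 := by rw [expand]

lemma mass_mixStrat (G : Game Q A) (hG : IsGame G) {d0 : Q → ℝ} (hd0 : IsDist d0)
    {σ : Strat1 Q A} (hσ : IsStrat1 σ) {τe τw : Strat2 Q A}
    (hτe : IsStrat2 τe) (hτw : IsStrat2 τw) (T : Finset Q) (i : ℕ) :
    mass (outSeq G d0 σ (mixStrat G d0 σ τe τw) i) T
      = (mass (outSeq G d0 σ τe i) T + mass (outSeq G d0 σ τw i) T) / 2 := by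
  unfold mass outSeq
  simp only [hprob_mixStrat G hG hd0 hσ hτe hτw]
  simp only [add_div, Finset.sum_add_distrib, Finset.sum_div]

end Aux

/-- in stochastic games, the almost-sure eventually synchronizing
winning region decomposes as the union of the sure eventually synchronizing and the
almost-sure weakly synchronizing winning regions. -/
theorem aswin_event_decomposition {Q A : Type} [Fintype Q] [Fintype A]
    (G : Game Q A) (hG : IsGame G) (T : Finset Q) :
    ASWin G T EventSync = SureWin G T EventSync ∪ ASWin G T WeaklySync := by
  ext d0
  constructor
  · rintro ⟨hd0, σ, hσ, hAS⟩
    by_contra hcon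
    rw [Set.mem_union] at hcon
    push_neg at hcon
    obtain ⟨h1, h2⟩ := hcon
    -- extract a spoiling strategy against sure eventually synchronizing with σ
    have h1' : ¬ (∀ τ, IsStrat2 τ →
        EventSync (fun i => mass (outSeq G d0 σ τ i) T) 0) := by
      intro hall
      exact h1 ⟨hd0, σ, hσ, hall⟩
    push_neg at h1'
    obtain ⟨τe, hτe, hne⟩ := h1'
    have hme : ∀ i, mass (outSeq G d0 σ τe i) T < 1 := by
      intro i
      by_contra hc
      push_neg at hc
      exact hne ⟨i, by linarith⟩
    -- extract a spoiling strategy against almost-sure weakly synchronizing with σ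
    have h2' : ¬ (∀ τ, IsStrat2 τ → ∀ ε : ℝ, 0 < ε →
        WeaklySync (fun i => mass (outSeq G d0 σ τ i) T) ε) := by
      intro hall
      exact h2 ⟨hd0, σ, hσ, hall⟩
    push_neg at h2'
    obtain ⟨τw, hτw, ε0, hε0, hnw⟩ := h2'
    unfold WeaklySync at hnw
    push_neg at hnw
    obtain ⟨N, hN⟩ := hnw
    have hmw1 : ∀ i, mass (outSeq G d0 σ τw i) T ≤ 1 :=
      fun i => mass_le_one G hG hd0 hσ hτw T i
    -- the superposition strategy
    set τ := mixStrat G d0 σ τe τw with hτdef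
    have hτ : IsStrat2 τ := mixStrat_isStrat G hG hd0 hσ hτe hτw
    set m : ℕ → ℝ := fun i => mass (outSeq G d0 σ τ i) T with hm
    have hmix : ∀ i, m i = (mass (outSeq G d0 σ τe i) T + mass (outSeq G d0 σ τw i) T) / 2 :=
      fun i => mass_mixStrat G hG hd0 hσ hτe hτw T i
    -- a uniform bound c < 1 on the superposition masses
    set S : Finset ℝ := insert (1 - ε0 / 2) ((Finset.range N).image fun i => m i) with hS
    have hSne : S.Nonempty := ⟨1 - ε0 / 2, Finset.mem_insert_self _ _⟩
    set c : ℝ := S.max' hSne with hc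
    have hεhalf : 1 - ε0 / 2 ≤ c := Finset.le_max' S _ (Finset.mem_insert_self _ _)
    have hc1 : c < 1 := by
      rw [hc]
      rcases Finset.mem_insert.mp (S.max'_mem hSne) with h | h
      · rw [h]; linarith
      · obtain ⟨i, hi, hval⟩ := Finset.mem_image.mp h
        rw [← hval, hmix i]
        have h1 := hme i
        have h2 := hmw1 i
        linarith
    have hbound : ∀ i, m i ≤ c := by
      intro i
      by_cases hiN : i < N
      · exact Finset.le_max' S _ (Finset.mem_insert_of_mem
          (Finset.mem_image.mpr ⟨i, Finset.mem_range.mpr hiN, rfl⟩))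
      · push_neg at hiN
        have hw := hN i hiN
        have he := hme i
        have : m i < 1 - ε0 / 2 := by
          rw [hmix i]
          linarith
        linarith
    -- contradiction with almost-sure eventually synchronizing
    have hε : (0:ℝ) < (1 - c) / 2 := by linarith
    obtain ⟨i, hi⟩ := hAS τ hτ ((1 - c) / 2) hε
    have : m i ≤ c := hbound i
    simp only [hm] at this
    linarith
  · rintro (⟨hd0, σ, hσ, hsure⟩ | ⟨hd0, σ, hσ, hweak⟩)
    · refine ⟨hd0, σ, hσ, fun τ hτ ε hε => ?_⟩
      obtain ⟨i, hi⟩ := hsure τ hτ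
      exact ⟨i, by linarith⟩
    · refine ⟨hd0, σ, hσ, fun τ hτ ε hε => ?_⟩
      obtain ⟨i, _, hi⟩ := hweak τ hτ ε hε 0
      exact ⟨i, hi⟩
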